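/- arXiv:1906.05493 — 8 statements merged into one kernel-verified Lean document; each statement's English description precedes it below -/
import Mathlib

section
/- Let P be a closed convex cone in R^d that is spanning and pointed with interior Ω. If (x_n) is a sequence in Ω converging to 0, then there exists a subsequence (x_{n_k}) that decreases to 0, i.e., x_{n_k} - x_{n_{k+1}} ∈ Ω for all k and x_{n_k} → 0. -/
open Filter Topology

theorem Filter.extraction_forall_succ_of_eventually {R : ℕ → ℕ → Prop}
    (h : ∀ m, ∀ᶠ n in atTop, R m n) :
    ∃ φ : ℕ → ℕ, StrictMono φ ∧ ∀ k, R (φ k) (φ (k + 1)) := by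
  choose next hnext using fun m => ((h m).and (eventually_gt_atTop m)).exists
  -- `Nat.rec` rather than `next^[k] 0`, so that `φ (k + 1) = next (φ k)` holds definitionally.
  let φ : ℕ → ℕ := fun k => Nat.rec 0 (fun _ => next) k
  exact ⟨φ, strictMono_nat_of_lt_succ fun k => (hnext (φ k)).2, fun k => (hnext (φ k)).1⟩

theorem Filter.Tendsto.eventually_const_sub_mem {G ι : Type*} [AddGroup G] [TopologicalSpace G]
    [ContinuousSub G] {l : Filter ι} {x : ι → G} (hx : Tendsto x l (𝓝 0)) {a : G} {U : Set G}
    (hU : U ∈ 𝓝 a) : ∀ᶠ n in l, a - x n ∈ U := by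
  have hsub : Tendsto (fun n => a - x n) l (𝓝 a) := by
    simpa using tendsto_const_nhds.sub hx
  exact hsub hU

theorem stmt3_general {d : ℕ} (P : Set (EuclideanSpace ℝ (Fin d)))
    (x : ℕ → EuclideanSpace ℝ (Fin d))
    (hx : ∀ n, x n ∈ interior P)
    (hlim : Filter.Tendsto x Filter.atTop (nhds 0)) :
    ∃ φ : ℕ → ℕ, StrictMono φ ∧
      (∀ k, x (φ k) - x (φ (k + 1)) ∈ interior P) ∧
      Filter.Tendsto (fun k => x (φ k)) Filter.atTop (nhds 0) := by
  obtain ⟨φ, hφ, hdecr⟩ := extraction_forall_succ_of_eventually fun m =>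
    hlim.eventually_const_sub_mem (isOpen_interior.mem_nhds (hx m))
  exact ⟨φ, hφ, hdecr, hlim.comp hφ.tendsto_atTop⟩

theorem stmt3 {d : ℕ} (P : Set (EuclideanSpace ℝ (Fin d)))
    (hclosed : IsClosed P) (hconv : Convex ℝ P)
    (hcone : ∀ c : ℝ, 0 ≤ c → ∀ x ∈ P, c • x ∈ P)
    (hspan : ∀ v : EuclideanSpace ℝ (Fin d), ∃ x ∈ P, ∃ y ∈ P, v = x - y)
    (hpointed : P ∩ (-P) = {0})
    (x : ℕ → EuclideanSpace ℝ (Fin d))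
    (hx : ∀ n, x n ∈ interior P)
    (hlim : Filter.Tendsto x Filter.atTop (nhds 0)) :
    ∃ φ : ℕ → ℕ, StrictMono φ ∧
      (∀ k, x (φ k) - x (φ (k + 1)) ∈ interior P) ∧
      Filter.Tendsto (fun k => x (φ k)) Filter.atTop (nhds 0) :=
  stmt3_general P x hx hlim
end

section
/- Let P be a polyhedral closed convex cone in R^d that is spanning and pointed. If (z_n) is a sequence in P converging to 0, then there exists a subsequence (z_{n_k}) with z_{n_k} - z_{n_{k+1}} ∈ P for all k (i.e., the subsequence is decreasing with respect to the order induced by P) and z_{n_k} → 0. -/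
/-!
Write `z n = ∑ i, r n i • v i` with nonnegative coefficients, taken to be `0` on the zero
generators. Pointedness means that a vanishing conic combination has vanishing terms, so `‖·‖` is
bounded below on the compact set of normalized coefficient vectors; hence the coefficients are
`O(‖z n‖)` and tend to `0`. A nonnegative real sequence tending to `0` has an antitone subsequence
(in the Erdős–Szekeres dichotomy a strictly increasing subsequence cannot tend to `0`), and
extracting such subsequences one coordinate at a time makes all coefficients antitone, so that
consecutive differences are again conic combinations.
-/

open Filter Topology

section Subsequence

lemma exists_strictMono_antitone_comp_of_tendsto_zero {u : ℕ → ℝ} (hu0 : ∀ n, 0 ≤ u n)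
    (hu : Tendsto u atTop (𝓝 0)) : ∃ φ : ℕ → ℕ, StrictMono φ ∧ Antitone (u ∘ φ) := by
  obtain ⟨g, hanti | hinc⟩ := exists_increasing_or_nonincreasing_subseq (· ≥ ·) u
  · exact ⟨g, g.strictMono, antitone_iff_forall_lt.2 hanti⟩
  · have hmono : Monotone (u ∘ g) :=
      monotone_iff_forall_lt.2 fun m n h => (not_le.1 (hinc m n h)).le
    have hle : u (g 1) ≤ 0 := hmono.ge_of_tendsto (hu.comp g.strictMono.tendsto_atTop) 1
    have hlt : u (g 0) < u (g 1) := not_le.1 (hinc 0 1 one_pos)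
    linarith [hu0 (g 0)]

lemma exists_strictMono_antitone_comp_of_tendsto_zero_pi {ι : Type*} [Fintype ι]
    {u : ℕ → ι → ℝ} (hu0 : ∀ n, 0 ≤ u n) (hu : Tendsto u atTop (𝓝 0)) :
    ∃ φ : ℕ → ℕ, StrictMono φ ∧ Antitone (u ∘ φ) := by
  classical
  suffices ∀ s : Finset ι, ∃ φ : ℕ → ℕ, StrictMono φ ∧ ∀ i ∈ s, Antitone fun k => u (φ k) i by
    obtain ⟨φ, hφ, hanti⟩ := this Finset.univ
    exact ⟨φ, hφ, antitone_iff_apply₂.2 fun i => hanti i (Finset.mem_univ i)⟩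
  intro s
  induction s using Finset.induction_on with
  | empty => exact ⟨id, strictMono_id, by simp⟩
  | insert a s _ ih =>
    obtain ⟨φ, hφ, hanti⟩ := ih
    obtain ⟨ψ, hψ, hanti_a⟩ := exists_strictMono_antitone_comp_of_tendsto_zero
      (fun k => hu0 (φ k) a) ((tendsto_pi_nhds.1 hu a).comp hφ.tendsto_atTop)
    refine ⟨φ ∘ ψ, hφ.comp hψ, fun i hi => ?_⟩
    rcases Finset.mem_insert.1 hi with rfl | hi
    · exact hanti_a
    · exact (hanti i hi).comp_monotone hψ.monotone

end Subsequence

section ConicCombinations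

variable {ι E : Type*} [Fintype ι]

section Algebraic

variable [AddCommGroup E] [Module ℝ E] {v : ι → E}

def conicCombinations (v : ι → E) : Set E :=
  {x | ∃ r : ι → ℝ, (∀ i, 0 ≤ r i) ∧ x = ∑ i, r i • v i}

lemma exists_coeffs_eq_zero_of_mem_conicCombinations {x : E} (hx : x ∈ conicCombinations v) :
    ∃ r : ι → ℝ, (∀ i, 0 ≤ r i) ∧ (∀ i, v i = 0 → r i = 0) ∧ x = ∑ i, r i • v i := by
  classical
  obtain ⟨r, hr, rfl⟩ := hx
  refine ⟨fun i => if v i = 0 then 0 else r i, fun i => ?_, fun i hi => if_pos hi, ?_⟩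
  · dsimp only
    split_ifs
    exacts [le_rfl, hr i]
  · exact Finset.sum_congr rfl fun i _ => by dsimp only; split_ifs with h <;> simp [h]

lemma smul_eq_zero_of_sum_smul_eq_zero
    (hpointed : conicCombinations v ∩ -conicCombinations v = {0}) {r : ι → ℝ}
    (hr : ∀ i, 0 ≤ r i) (hsum : ∑ i, r i • v i = 0) (i : ι) : r i • v i = 0 := by
  classical
  have hsingle : ∑ j, (Pi.single i (r i) : ι → ℝ) j • v j = r i • v i := by
    simp [Pi.single_apply]
  have hsingle_nonneg : ∀ j, 0 ≤ (Pi.single i (r i) : ι → ℝ) j := fun j => by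
    by_cases h : j = i <;> simp [h, hr i]
  have hrest_nonneg : ∀ j, 0 ≤ (r - (Pi.single i (r i) : ι → ℝ)) j := fun j => by
    by_cases h : j = i <;> simp [h, hr j]
  have hrest : ∑ j, (r - (Pi.single i (r i) : ι → ℝ)) j • v j = -(r i • v i) := by
    simp only [Pi.sub_apply, sub_smul, Finset.sum_sub_distrib, hsum, hsingle, zero_sub]
  have hmem : r i • v i ∈ conicCombinations v ∩ -conicCombinations v :=
    ⟨⟨_, hsingle_nonneg, hsingle.symm⟩, ⟨_, hrest_nonneg, hrest.symm⟩⟩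
  rwa [hpointed] at hmem

end Algebraic

variable [NormedAddCommGroup E] [NormedSpace ℝ E] {v : ι → E}

lemma exists_pos_mul_sum_le_norm_sum_smul
    (hpointed : conicCombinations v ∩ -conicCombinations v = {0}) :
    ∃ c > 0, ∀ r : ι → ℝ, (∀ i, 0 ≤ r i) → (∀ i, v i = 0 → r i = 0) →
      c * ∑ i, r i ≤ ‖∑ i, r i • v i‖ := by
  set K := stdSimplex ℝ ι ∩ ⋂ i ∈ {i | v i = 0}, {r : ι → ℝ | r i = 0}
  have hK : IsCompact K := (isCompact_stdSimplex ℝ ι).inter_right <|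
    isClosed_biInter fun i _ => isClosed_eq (continuous_apply i) continuous_const
  have hpos : ∀ r ∈ K, (0 : ℝ) < ‖∑ i, r i • v i‖ := by
    rintro r ⟨⟨hr0, hr1⟩, hrv⟩
    simp only [Set.mem_iInter, Set.mem_ofPred_eq] at hrv
    refine norm_pos_iff.2 fun hsum => ?_
    have hzero : ∀ i, r i = 0 := fun i =>
      (smul_eq_zero.1 (smul_eq_zero_of_sum_smul_eq_zero hpointed hr0 hsum i)).elim id (hrv i)
    simp [hzero] at hr1
  obtain ⟨c, hc, hcK⟩ := hK.exists_forall_le' (by fun_prop) hpos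
  refine ⟨c, hc, fun r hr hrv => ?_⟩
  rcases (Finset.sum_nonneg fun i _ => hr i : 0 ≤ ∑ i, r i).eq_or_lt with hs | hs
  · rw [← hs, mul_zero]
    exact norm_nonneg _
  · have hrK : (∑ i, r i)⁻¹ • r ∈ K := by
      refine ⟨⟨fun i => smul_nonneg (inv_nonneg.2 hs.le) (hr i), ?_⟩, ?_⟩
      · simp [← Finset.mul_sum, inv_mul_cancel₀ hs.ne']
      · simp only [Set.mem_iInter, Set.mem_ofPred_eq]
        exact fun i hv => by simp [hrv i hv]
    have hscale := hcK _ hrK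
    simp only [Pi.smul_apply, smul_eq_mul, mul_smul, ← Finset.smul_sum, norm_smul,
      Real.norm_eq_abs, abs_of_pos (inv_pos.2 hs)] at hscale
    rwa [le_inv_mul_iff₀ hs, mul_comm] at hscale

lemma tendsto_coeffs_nhds_zero
    (hpointed : conicCombinations v ∩ -conicCombinations v = {0}) {r : ℕ → ι → ℝ}
    (hr0 : ∀ n i, 0 ≤ r n i) (hrv : ∀ n i, v i = 0 → r n i = 0)
    (hlim : Tendsto (fun n => ∑ i, r n i • v i) atTop (𝓝 0)) :
    Tendsto r atTop (𝓝 0) := by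
  obtain ⟨c, hc, hbound⟩ := exists_pos_mul_sum_le_norm_sum_smul hpointed
  refine tendsto_pi_nhds.2 fun i => ?_
  have hnorm : Tendsto (fun n => ‖∑ i, r n i • v i‖ / c) atTop (𝓝 0) := by
    simpa using hlim.norm.div_const c
  refine squeeze_zero (fun n => hr0 n i) (fun n => ?_) hnorm
  rw [le_div_iff₀ hc, mul_comm]
  exact (mul_le_mul_of_nonneg_left
    (Finset.single_le_sum (fun j _ => hr0 n j) (Finset.mem_univ i)) hc.le).trans
    (hbound (r n) (hr0 n) (hrv n))

end ConicCombinations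

theorem stmt4_general {d : ℕ} (P : Set (EuclideanSpace ℝ (Fin d)))
    (hpointed : P ∩ (-P) = {0})
    (hpoly : ∃ (k : ℕ) (v : Fin k → EuclideanSpace ℝ (Fin d)),
      P = {x | ∃ r : Fin k → ℝ, (∀ i, 0 ≤ r i) ∧ x = ∑ i, r i • v i})
    (z : ℕ → EuclideanSpace ℝ (Fin d))
    (hz : ∀ n, z n ∈ P)
    (hlim : Filter.Tendsto z Filter.atTop (nhds 0)) :
    ∃ φ : ℕ → ℕ, StrictMono φ ∧
      (∀ k, z (φ k) - z (φ (k + 1)) ∈ P) ∧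
      Filter.Tendsto (fun k => z (φ k)) Filter.atTop (nhds 0) := by
  obtain ⟨k, v, rfl⟩ := hpoly
  choose r hr0 hrv hrz using fun n => exists_coeffs_eq_zero_of_mem_conicCombinations (hz n)
  have hr : Tendsto r atTop (𝓝 0) :=
    tendsto_coeffs_nhds_zero hpointed hr0 hrv (funext hrz ▸ hlim)
  obtain ⟨φ, hφ, hanti⟩ := exists_strictMono_antitone_comp_of_tendsto_zero_pi (fun n => hr0 n) hr
  refine ⟨φ, hφ, fun m => ?_, hlim.comp hφ.tendsto_atTop⟩
  rw [hrz, hrz, ← Finset.sum_sub_distrib]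
  exact ⟨fun i => r (φ m) i - r (φ (m + 1)) i, fun i => sub_nonneg.2 (hanti m.le_succ i),
    by simp only [sub_smul]⟩

theorem stmt4 {d : ℕ} (P : Set (EuclideanSpace ℝ (Fin d)))
    (hclosed : IsClosed P) (hconv : Convex ℝ P)
    (hcone : ∀ c : ℝ, 0 ≤ c → ∀ x ∈ P, c • x ∈ P)
    (hspan : ∀ v : EuclideanSpace ℝ (Fin d), ∃ x ∈ P, ∃ y ∈ P, v = x - y)
    (hpointed : P ∩ (-P) = {0})
    (hpoly : ∃ (k : ℕ) (v : Fin k → EuclideanSpace ℝ (Fin d)),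
      P = {x | ∃ r : Fin k → ℝ, (∀ i, 0 ≤ r i) ∧ x = ∑ i, r i • v i})
    (z : ℕ → EuclideanSpace ℝ (Fin d))
    (hz : ∀ n, z n ∈ P)
    (hlim : Filter.Tendsto z Filter.atTop (nhds 0)) :
    ∃ φ : ℕ → ℕ, StrictMono φ ∧
      (∀ k, z (φ k) - z (φ (k + 1)) ∈ P) ∧
      Filter.Tendsto (fun k => z (φ k)) Filter.atTop (nhds 0) :=
  stmt4_general P hpointed hpoly z hz hlim
end

section
/- Let V be a real inner product space of dimension at least 2, let S(V) be the space of symmetric operators on V and P(V) the cone of positive semidefinite symmetric operators. Choose unit vectors (v_n) in V such that v_m is not a scalar multiple of v_n for m ≠ n, and let P_n be the orthogonal projection onto span{v_n}. Set z_n = (1/n) P_n. Then z_n → 0, but no subsequence of (z_n) is decreasing with respect to the order induced by P(V) (i.e., there is no subsequence with each successive difference positive semidefinite). -/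
open scoped RealInnerProductSpace

theorem stmt5 {V : Type*} [NormedAddCommGroup V] [InnerProductSpace ℝ V]
    [FiniteDimensional ℝ V] (hdim : 2 ≤ Module.finrank ℝ V)
    (v : ℕ → V) (hv : ∀ n, ‖v n‖ = 1)
    (hind : ∀ m n, m ≠ n → ∀ c : ℝ, v m ≠ c • v n)
    (z : ℕ → V →L[ℝ] V)
    (hz : ∀ n (x : V), z n x = ((n : ℝ) + 1)⁻¹ • (⟪x, v n⟫ • v n)) :
    Filter.Tendsto z Filter.atTop (nhds 0) ∧
      ¬ ∃ φ : ℕ → ℕ, StrictMono φ ∧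
        ∀ k, ∀ x : V, 0 ≤ ⟪(z (φ k) - z (φ (k + 1))) x, x⟫ := by
  constructor
  · rw [tendsto_zero_iff_norm_tendsto_zero]
    have hbound : ∀ n : ℕ, ‖z n‖ ≤ ((n : ℝ) + 1)⁻¹ := by
      intro n
      apply ContinuousLinearMap.opNorm_le_bound
      · positivity
      · intro x
        rw [hz n x, norm_smul, norm_smul, hv n, mul_one,
          Real.norm_eq_abs, Real.norm_eq_abs, abs_inv, abs_of_nonneg (by positivity)]
        have := abs_real_inner_le_norm x (v n)
        rw [hv n, mul_one] at this
        exact mul_le_mul_of_nonneg_left this (by positivity)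
    apply squeeze_zero (fun n => norm_nonneg _) hbound
    have : Filter.Tendsto (fun n : ℕ => 1 / ((n : ℝ) + 1)) Filter.atTop (nhds 0) :=
      tendsto_one_div_add_atTop_nhds_zero_nat
    simpa [one_div] using this
  · rintro ⟨φ, hφ, hmono⟩
    set m := φ 0 with hm
    set n := φ 1 with hn
    have hmn : m ≠ n := (hφ (by norm_num : (0:ℕ) < 1)).ne
    -- construct x orthogonal to v m but not to v n
    set x := v n - ⟪v n, v m⟫ • v m with hx
    have hxm : ⟪x, v m⟫ = 0 := by
      have h1 : ⟪v m, v m⟫ = 1 := by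
        rw [real_inner_self_eq_norm_sq, hv m]; norm_num
      simp [hx, inner_sub_left, real_inner_smul_left, h1, hv]
    have hxn : ⟪x, v n⟫ ≠ 0 := by
      have h1 : ⟪v n, v n⟫ = 1 := by
        rw [real_inner_self_eq_norm_sq, hv n]; norm_num
      simp only [hx, inner_sub_left, real_inner_smul_left, h1]
      intro hcon
      have h2 : ⟪v m, v n⟫ * ⟪v n, v m⟫ = 1 := by
        rw [real_inner_comm (v m)] at *
        linarith
      rw [real_inner_comm (v m)] at h2
      have habs : |⟪v n, v m⟫| = 1 := by
        have : ⟪v n, v m⟫ ^ 2 = 1 := by nlinarith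
        nlinarith [abs_nonneg ⟪v n, v m⟫, sq_abs ⟪v n, v m⟫]
      rcases abs_eq (by norm_num : (0:ℝ) ≤ 1) |>.mp habs with h | h
      · have : ⟪v n, v m⟫ = ‖v n‖ * ‖v m‖ := by rw [hv, hv]; simpa using h
        rw [inner_eq_norm_mul_iff_real] at this
        rw [hv, hv, one_smul, one_smul] at this
        exact hind n m hmn.symm 1 (by simpa using this)
      · have : ⟪v n, -v m⟫ = ‖v n‖ * ‖-v m‖ := by
          rw [inner_neg_right, norm_neg, hv, hv]; simp [h]
        rw [inner_eq_norm_mul_iff_real] at this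
        rw [norm_neg, hv, hv, one_smul, one_smul] at this
        refine hind n m hmn.symm (-1) ?_
        rw [neg_one_smul, ← this]
    have hk := hmono 0 x
    rw [ContinuousLinearMap.sub_apply, inner_sub_left, hz, hz] at hk
    simp only [real_inner_smul_left] at hk
    rw [← hm, ← hn, hxm] at hk
    have hpos : (0:ℝ) < ((n : ℝ) + 1)⁻¹ := by positivity
    have hsq : 0 < ⟪x, v n⟫ * ⟪v n, x⟫ := by
      have hcomm : ⟪v n, x⟫ = ⟪x, v n⟫ := real_inner_comm _ _
      rw [hcomm]
      exact mul_self_pos.mpr hxn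
    nlinarith
end

section
/- Let P be a closed convex cone in R^d, spanning and pointed, with interior Ω, and let a ∈ Ω. If (x_n) is a sequence in P converging to a, then there exists a subsequence (x_{n_k}) and positive reals (t_{n_k}) such that t_{n_k} → 1, z_{n_k} := x_{n_k} - t_{n_k} a ∈ P for all k, and (z_{n_k}) decreases to 0 (each difference z_{n_k} - z_{n_{k+1}} ∈ P and z_{n_k} → 0). -/
/-!
Around an interior point `a` the cone contains a closed ball of some radius `r`, hence, by scaling,
every `s • a + v` with `‖v‖ ≤ s r`. Pass to a subsequence with `‖x (φ k) - a‖ ≤ r δₖ / 4`, where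
`δₖ = 2⁻⁽ᵏ⁺¹⁾`, and put `tₖ = 1 - δₖ`. Then `zₖ = δₖ • a + (x (φ k) - a)` lies in the cone, and so
does `zₖ - zₖ₊₁ = (δₖ / 2) • a + (x (φ k) - x (φ (k + 1)))`, whose second summand has norm at most
`r δₖ / 2`.
-/

open Filter Topology

theorem exists_strictMono_forall_dist_le {X : Type*} [PseudoMetricSpace X] {x : ℕ → X} {a : X}
    (hx : Tendsto x atTop (𝓝 a)) {ε : ℕ → ℝ} (hε : ∀ k, 0 < ε k) :
    ∃ φ : ℕ → ℕ, StrictMono φ ∧ ∀ k, dist (x (φ k)) a ≤ ε k :=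
  extraction_forall_of_eventually fun k => hx.eventually (Metric.closedBall_mem_nhds a (hε k))

section Cone

variable {E : Type*} [NormedAddCommGroup E] [NormedSpace ℝ E] {P : Set E} {a : E}

theorem exists_smul_add_mem_of_mem_interior (hcone : ∀ c : ℝ, 0 < c → ∀ x ∈ P, c • x ∈ P)
    (ha : a ∈ interior P) : ∃ r > 0, ∀ s > 0, ∀ v : E, ‖v‖ ≤ s * r → s • a + v ∈ P := by
  obtain ⟨r, hr, hball⟩ :=
    Metric.nhds_basis_closedBall.mem_iff.mp (mem_interior_iff_mem_nhds.mp ha)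
  refine ⟨r, hr, fun s hs v hv => ?_⟩
  have hmem : a + s⁻¹ • v ∈ P := hball <| by
    rwa [Metric.mem_closedBall, dist_eq_norm, add_sub_cancel_left, norm_smul,
      Real.norm_of_nonneg (inv_nonneg.2 hs.le), inv_mul_le_iff₀ hs]
  simpa [smul_add, smul_smul, hs.ne'] using hcone s hs _ hmem

variable {r δ : ℝ} (hP : ∀ s > 0, ∀ v : E, ‖v‖ ≤ s * r → s • a + v ∈ P) (hδ : 0 < δ)
include hP hδ

theorem sub_one_sub_smul_mem {y : E} (hy : ‖y - a‖ ≤ r * δ / 4) : y - (1 - δ) • a ∈ P := by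
  rw [show y - (1 - δ) • a = δ • a + (y - a) by module]
  exact hP δ hδ _ (by linarith [norm_nonneg (y - a)])

theorem sub_one_sub_smul_sub_mem {y y' : E} (hy : ‖y - a‖ ≤ r * δ / 4)
    (hy' : ‖y' - a‖ ≤ r * δ / 4) : (y - (1 - δ) • a) - (y' - (1 - δ / 2) • a) ∈ P := by
  rw [show (y - (1 - δ) • a) - (y' - (1 - δ / 2) • a) = (δ / 2) • a + ((y - a) - (y' - a)) by
    module]
  exact hP _ (half_pos hδ) _ (by linarith [norm_sub_le (y - a) (y' - a)])

end Cone

theorem stmt6_general {d : ℕ} (P : Set (EuclideanSpace ℝ (Fin d)))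
    (hcone : ∀ c : ℝ, 0 ≤ c → ∀ x ∈ P, c • x ∈ P)
    (a : EuclideanSpace ℝ (Fin d)) (ha : a ∈ interior P)
    (x : ℕ → EuclideanSpace ℝ (Fin d))
    (hlim : Filter.Tendsto x Filter.atTop (nhds a)) :
    ∃ (φ : ℕ → ℕ) (t : ℕ → ℝ), StrictMono φ ∧
      (∀ k, 0 < t k) ∧
      Filter.Tendsto t Filter.atTop (nhds 1) ∧
      (∀ k, x (φ k) - t k • a ∈ P) ∧
      (∀ k, (x (φ k) - t k • a) - (x (φ (k + 1)) - t (k + 1) • a) ∈ P) ∧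
      Filter.Tendsto (fun k => x (φ k) - t k • a) Filter.atTop (nhds 0) := by
  obtain ⟨r, hr, hP⟩ := exists_smul_add_mem_of_mem_interior (fun c hc => hcone c hc.le) ha
  set δ : ℕ → ℝ := fun k => (1 / 2) ^ (k + 1) with hδ_def
  have hδ_pos (k : ℕ) : 0 < δ k := by positivity
  have hδ_succ (k : ℕ) : δ (k + 1) = δ k / 2 := by simp only [hδ_def, pow_succ]; ring
  have hδ_lim : Tendsto δ atTop (𝓝 0) :=
    (tendsto_pow_atTop_nhds_zero_of_lt_one (by norm_num) (by norm_num)).comp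
      (tendsto_add_atTop_nat 1)
  have ht_lim : Tendsto (fun k => 1 - δ k) atTop (𝓝 1) := by
    simpa using (tendsto_const_nhds (x := (1 : ℝ))).sub hδ_lim
  obtain ⟨φ, hφ, hclose⟩ :=
    exists_strictMono_forall_dist_le hlim (ε := fun k => r * δ k / 4) fun k => by positivity
  simp only [dist_eq_norm] at hclose
  refine ⟨φ, fun k => 1 - δ k, hφ, fun k => ?_, ?_, fun k => ?_, fun k => ?_, ?_⟩
  · show 0 < 1 - δ k
    linarith [show δ k < 1 from pow_lt_one₀ (by norm_num) (by norm_num) k.succ_ne_zero]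
  · exact ht_lim
  · exact sub_one_sub_smul_mem hP (hδ_pos k) (hclose k)
  · beta_reduce
    rw [hδ_succ]
    refine sub_one_sub_smul_sub_mem hP (hδ_pos k) (hclose k) ((hclose (k + 1)).trans ?_)
    rw [hδ_succ]
    linarith [mul_pos hr (hδ_pos k)]
  · simpa using (hlim.comp hφ.tendsto_atTop).sub (ht_lim.smul_const a)

theorem stmt6 {d : ℕ} (P : Set (EuclideanSpace ℝ (Fin d)))
    (hclosed : IsClosed P) (hconv : Convex ℝ P)
    (hcone : ∀ c : ℝ, 0 ≤ c → ∀ x ∈ P, c • x ∈ P)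
    (hspan : ∀ v : EuclideanSpace ℝ (Fin d), ∃ x ∈ P, ∃ y ∈ P, v = x - y)
    (hpointed : P ∩ (-P) = {0})
    (a : EuclideanSpace ℝ (Fin d)) (ha : a ∈ interior P)
    (x : ℕ → EuclideanSpace ℝ (Fin d)) (hx : ∀ n, x n ∈ P)
    (hlim : Filter.Tendsto x Filter.atTop (nhds a)) :
    ∃ (φ : ℕ → ℕ) (t : ℕ → ℝ), StrictMono φ ∧
      (∀ k, 0 < t k) ∧
      Filter.Tendsto t Filter.atTop (nhds 1) ∧
      (∀ k, x (φ k) - t k • a ∈ P) ∧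
      (∀ k, (x (φ k) - t k • a) - (x (φ (k + 1)) - t (k + 1) • a) ∈ P) ∧
      Filter.Tendsto (fun k => x (φ k) - t k • a) Filter.atTop (nhds 0) :=
  stmt6_general P hcone a ha x hlim
end

section
/- Let V, W be isometries on a Hilbert space H, ξ ∈ Ker(V*), η ∈ Ker(W*). Then the composition of the exponential operators satisfies T_{e(ξ)}^{V} ∘ T_{e(η)}^{W} = T_{e(ξ + Vη)}^{VW}, where ξ + Vη ∈ Ker((VW)*). -/
namespace ContinuousLinearMap

variable {𝕜 E F G : Type*} [RCLike 𝕜]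
  [NormedAddCommGroup E] [InnerProductSpace 𝕜 E] [CompleteSpace E]
  [NormedAddCommGroup F] [InnerProductSpace 𝕜 F] [CompleteSpace F]
  [NormedAddCommGroup G] [InnerProductSpace 𝕜 G] [CompleteSpace G]

theorem adjoint_apply_apply_of_norm_map {V : F →L[𝕜] G} (hV : ∀ x, ‖V x‖ = ‖x‖) (x : F) :
    adjoint V (V x) = x := by
  rw [← comp_apply, V.norm_map_iff_adjoint_comp_self.mp hV, one_apply_eq_self]

theorem adjoint_comp_apply_add_eq_zero {V : F →L[𝕜] G} {W : E →L[𝕜] F}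
    (hV : ∀ x, ‖V x‖ = ‖x‖) {ξ : G} {η : F} (hξ : adjoint V ξ = 0) (hη : adjoint W η = 0) :
    adjoint (V ∘L W) (ξ + V η) = 0 := by
  rw [adjoint_comp, comp_apply, map_add, hξ, zero_add, adjoint_apply_apply_of_norm_map hV, hη]

end ContinuousLinearMap

open scoped ComplexInnerProductSpace

theorem stmt10_general {H Γ : Type*} [NormedAddCommGroup H] [InnerProductSpace ℂ H]
    [CompleteSpace H] [NormedAddCommGroup Γ] [InnerProductSpace ℂ Γ]
    (e : H → Γ)
    (htotal : (Submodule.span ℂ (Set.range e)).topologicalClosure = ⊤)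
    (V W : H →L[ℂ] H)
    (hV : ∀ x : H, ‖V x‖ = ‖x‖)
    (ξ η : H)
    (hξ : ContinuousLinearMap.adjoint V ξ = 0)
    (hη : ContinuousLinearMap.adjoint W η = 0)
    (T₁ T₂ T₃ : Γ →L[ℂ] Γ)
    (hT₁ : ∀ μ : H, T₁ (e μ) = e (ξ + V μ))
    (hT₂ : ∀ μ : H, T₂ (e μ) = e (η + W μ))
    (hT₃ : ∀ μ : H, T₃ (e μ) = e ((ξ + V η) + (V.comp W) μ)) :
    ContinuousLinearMap.adjoint (V.comp W) (ξ + V η) = 0 ∧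
    T₁.comp T₂ = T₃ := by
  refine ⟨ContinuousLinearMap.adjoint_comp_apply_add_eq_zero hV hξ hη, ?_⟩
  refine ContinuousLinearMap.ext_on (Submodule.dense_iff_topologicalClosure_eq_top.mpr htotal) ?_
  rintro _ ⟨μ, rfl⟩
  rw [ContinuousLinearMap.comp_apply, hT₂, hT₁, hT₃, map_add, add_assoc,
    ContinuousLinearMap.comp_apply]

theorem stmt10 {H Γ : Type*} [NormedAddCommGroup H] [InnerProductSpace ℂ H]
    [CompleteSpace H] [NormedAddCommGroup Γ] [InnerProductSpace ℂ Γ]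
    [CompleteSpace Γ]
    (e : H → Γ)
    (htotal : (Submodule.span ℂ (Set.range e)).topologicalClosure = ⊤)
    (hinner : ∀ ξ η : H, ⟪e ξ, e η⟫ = Complex.exp ⟪ξ, η⟫)
    (V W : H →L[ℂ] H)
    (hV : ∀ x : H, ‖V x‖ = ‖x‖) (hW : ∀ x : H, ‖W x‖ = ‖x‖)
    (ξ η : H)
    (hξ : ContinuousLinearMap.adjoint V ξ = 0)
    (hη : ContinuousLinearMap.adjoint W η = 0)
    (T₁ T₂ T₃ : Γ →L[ℂ] Γ)
    (hT₁ : ∀ μ : H, T₁ (e μ) = e (ξ + V μ))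
    (hT₂ : ∀ μ : H, T₂ (e μ) = e (η + W μ))
    (hT₃ : ∀ μ : H, T₃ (e μ) = e ((ξ + V η) + (V.comp W) μ)) :
    ContinuousLinearMap.adjoint (V.comp W) (ξ + V η) = 0 ∧
    T₁.comp T₂ = T₃ :=
  stmt10_general e htotal V W hV ξ η hξ hη T₁ T₂ T₃ hT₁ hT₂ hT₃
end

section
/- Let P ⊆ R^d be a spanning pointed closed convex cone and let V = (V_x)_{x∈P} be a semigroup of isometries on a Hilbert space H (V_x V_y = V_{x+y}). Let ξ = (ξ_x)_{x∈P} be an additive cocycle: ξ_x ∈ Ker(V_x*), the map x ↦ ξ_x is continuous, and ξ_{x+y} = ξ_x + V_x ξ_y for all x, y ∈ P. Then there exists μ ∈ R^d such that ⟨ξ_x, ξ_x⟩ = ⟨μ, x⟩ for all x ∈ P. -/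
open scoped RealInnerProductSpace

theorem stmt11 {d : ℕ} {H : Type*} [NormedAddCommGroup H]
    [InnerProductSpace ℂ H] [CompleteSpace H]
    (P : Set (EuclideanSpace ℝ (Fin d)))
    (hclosed : IsClosed P) (hconv : Convex ℝ P)
    (hcone : ∀ c : ℝ, 0 ≤ c → ∀ x ∈ P, c • x ∈ P)
    (hspan : ∀ v : EuclideanSpace ℝ (Fin d), ∃ x ∈ P, ∃ y ∈ P, v = x - y)
    (hpointed : P ∩ (-P) = {0})
    (V : EuclideanSpace ℝ (Fin d) → H →L[ℂ] H)
    (hiso : ∀ x ∈ P, ∀ h : H, ‖V x h‖ = ‖h‖)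
    (hsemi : ∀ x ∈ P, ∀ y ∈ P, (V x).comp (V y) = V (x + y))
    (ξ : EuclideanSpace ℝ (Fin d) → H)
    (hker : ∀ x ∈ P, ContinuousLinearMap.adjoint (V x) (ξ x) = 0)
    (hcont : ContinuousOn ξ P)
    (hcocycle : ∀ x ∈ P, ∀ y ∈ P, ξ (x + y) = ξ x + V x (ξ y)) :
    ∃ μ : EuclideanSpace ℝ (Fin d), ∀ x ∈ P, ‖ξ x‖ ^ 2 = ⟪μ, x⟫ := by
  classical
  set f : EuclideanSpace ℝ (Fin d) → ℝ := fun x => ‖ξ x‖ ^ 2 with hf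
  -- P closed under addition
  have hzeroP : (0 : EuclideanSpace ℝ (Fin d)) ∈ P := by
    obtain ⟨x, hx, -⟩ := hspan 0
    simpa using hcone 0 le_rfl x hx
  have haddP : ∀ x ∈ P, ∀ y ∈ P, x + y ∈ P := by
    intro x hx y hy
    have h2 : ((1:ℝ)/2) • x + ((1:ℝ)/2) • y ∈ P :=
      hconv hx hy (by norm_num) (by norm_num) (by norm_num)
    have := hcone 2 (by norm_num) _ h2
    have heq : (2:ℝ) • (((1:ℝ)/2) • x + ((1:ℝ)/2) • y) = x + y := by
      rw [smul_add, smul_smul, smul_smul]; norm_num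
    rwa [heq] at this
  -- additivity of f on P
  have hadd : ∀ x ∈ P, ∀ y ∈ P, f (x + y) = f x + f y := by
    intro x hx y hy
    have horth : (inner ℂ (ξ x) (V x (ξ y)) : ℂ) = 0 := by
      rw [← ContinuousLinearMap.adjoint_inner_left, hker x hx, inner_zero_left]
    have : f (x + y) = ‖ξ x + V x (ξ y)‖ ^ 2 := by
      simp only [hf]; rw [hcocycle x hx y hy]
    rw [this, norm_add_sq (𝕜 := ℂ), horth, hiso x hx]
    simp [hf]
  have hzero : f 0 = 0 := by
    have := hadd 0 hzeroP 0 hzeroP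
    simp only [add_zero] at this; linarith
  -- natural homogeneity
  have hnat : ∀ y ∈ P, ∀ n : ℕ, f ((n : ℝ) • y) = n * f y := by
    intro y hy n
    induction n with
    | zero => simpa using hzero
    | succ n ih =>
      have hmem : (n : ℝ) • y ∈ P := hcone _ (Nat.cast_nonneg n) y hy
      push_cast
      rw [add_smul, one_smul, hadd _ hmem _ hy, ih]
      ring
  -- rational homogeneity
  have hrat : ∀ y ∈ P, ∀ q : ℚ, 0 ≤ q → f ((q : ℝ) • y) = (q : ℝ) * f y := by
    intro y hy q hq
    have hqmem : (q : ℝ) • y ∈ P := hcone _ (by exact_mod_cast hq) y hy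
    have hden : (0 : ℝ) < (q.den : ℝ) := by exact_mod_cast q.pos
    have hnum : ((q.num.toNat : ℝ)) = (q.num : ℝ) := by
      exact_mod_cast congrArg (Int.cast : ℤ → ℝ) (Int.toNat_of_nonneg (Rat.num_nonneg.2 hq))
    have hkey : ((q.den : ℝ)) • ((q : ℝ) • y) = ((q.num.toNat : ℝ)) • y := by
      rw [smul_smul, hnum]
      congr 1
      have : ((q.den : ℚ)) * q = (q.num : ℚ) := by
        rw [mul_comm, Rat.mul_den_eq_num]
      exact_mod_cast congrArg (Rat.cast : ℚ → ℝ) this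
    have h1 := hnat _ hqmem q.den
    rw [hkey, hnat y hy] at h1
    -- h1 : q.den * f (q • y) = q.num.toNat * f y
    have h2 : (q : ℝ) * (q.den : ℝ) = (q.num : ℝ) := by
      have : q * (q.den : ℚ) = (q.num : ℚ) := Rat.mul_den_eq_num q
      exact_mod_cast congrArg (Rat.cast : ℚ → ℝ) this
    rw [hnum] at h1
    have hden' : (q.den : ℝ) ≠ 0 := ne_of_gt hden
    have hfin : (q.den : ℝ) * f ((q:ℝ) • y) = (q.den : ℝ) * ((q:ℝ) * f y) := by
      rw [← h1, ← h2]; ring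
    exact mul_left_cancel₀ hden' hfin
  -- continuity of f on P
  have hfcont : ContinuousOn f P := (hcont.norm.pow 2)
  -- real homogeneity via density
  have hsmul : ∀ y ∈ P, ∀ c : ℝ, 0 ≤ c → f (c • y) = c * f y := by
    intro y hy c hc
    have hmap : Set.MapsTo (fun c : ℝ => c • y) (Set.Ici 0) P := fun c hc => hcone c hc y hy
    have hφ : ContinuousOn (fun c : ℝ => f (c • y) - c * f y) (Set.Ici 0) := by
      apply ContinuousOn.sub
      · exact hfcont.comp ((continuous_id.smul continuous_const).continuousOn) hmap
      · exact (continuous_id.mul continuous_const).continuousOn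
    set S : Set ℝ := Set.Ici 0 ∩ (fun c : ℝ => f (c • y) - c * f y) ⁻¹' {0} with hS
    have hSclosed : IsClosed S :=
      hφ.preimage_isClosed_of_isClosed isClosed_Ici isClosed_singleton
    have hmemS : c ∈ closure S := by
      rw [mem_closure_iff_seq_limit]
      have hex : ∀ n : ℕ, ∃ q : ℚ, c < (q : ℝ) ∧ (q : ℝ) < c + 1 / (n + 1) := by
        intro n
        have hpos : (0:ℝ) < 1 / ((n:ℝ) + 1) := by positivity
        exact exists_rat_btwn (by push_cast; linarith)
      choose qs hq1 hq2 using hex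
      refine ⟨fun n => (qs n : ℝ), fun n => ?_, ?_⟩
      · have hqnn : (0:ℝ) ≤ (qs n : ℝ) := le_of_lt (lt_of_le_of_lt hc (hq1 n))
        have hqnnQ : (0:ℚ) ≤ qs n := by exact_mod_cast hqnn
        refine ⟨hqnn, ?_⟩
        simp only [Set.mem_preimage, Set.mem_singleton_iff]
        rw [hrat y hy (qs n) hqnnQ]; ring
      · have h1 : Filter.Tendsto (fun n : ℕ => c + 1 / ((n:ℝ) + 1)) Filter.atTop (nhds c) := by
          have := tendsto_one_div_add_atTop_nhds_zero_nat (𝕜 := ℝ)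
          simpa using ((tendsto_const_nhds (x := c)).add this)
        exact tendsto_of_tendsto_of_tendsto_of_le_of_le tendsto_const_nhds h1
          (fun n => le_of_lt (hq1 n)) (fun n => le_of_lt (hq2 n))
    have : c ∈ S := hSclosed.closure_subset hmemS
    have := this.2
    simp only [Set.mem_preimage, Set.mem_singleton_iff] at this
    linarith
  -- choose decompositions
  choose X hX Y hY hXY using hspan
  -- well-definedness
  have hwd : ∀ x ∈ P, ∀ y ∈ P, ∀ x' ∈ P, ∀ y' ∈ P, x - y = x' - y' →
      f x - f y = f x' - f y' := by
    intro x hx y hy x' hx' y' hy' h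
    have hsum : x + y' = x' + y := sub_eq_sub_iff_add_eq_add.mp h
    have h1 := hadd x hx y' hy'
    have h2 := hadd x' hx' y hy
    rw [hsum, h2] at h1
    linarith
  set g : EuclideanSpace ℝ (Fin d) → ℝ := fun v => f (X v) - f (Y v) with hg
  have hgP : ∀ x ∈ P, ∀ y ∈ P, g (x - y) = f x - f y := by
    intro x hx y hy
    exact hwd _ (hX _) _ (hY _) x hx y hy (hXY (x - y)).symm
  have hgadd : ∀ u v, g (u + v) = g u + g v := by
    intro u v
    have hdecomp : u + v = (X u + X v) - (Y u + Y v) := by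
      conv_lhs => rw [hXY u, hXY v]
      abel
    rw [hdecomp, hgP _ (haddP _ (hX u) _ (hX v)) _ (haddP _ (hY u) _ (hY v)),
      hadd _ (hX u) _ (hX v), hadd _ (hY u) _ (hY v)]
    simp only [hg]; ring
  have hgsmul : ∀ (c : ℝ) v, g (c • v) = c * g v := by
    intro c v
    rcases le_or_gt 0 c with hc | hc
    · have hdecomp : c • v = c • X v - c • Y v := by
        conv_lhs => rw [hXY v]
        rw [smul_sub]
      rw [hdecomp, hgP _ (hcone c hc _ (hX v)) _ (hcone c hc _ (hY v)),
        hsmul _ (hX v) c hc, hsmul _ (hY v) c hc]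
      simp only [hg]; ring
    · have hc' : 0 ≤ -c := by linarith
      have hdecomp : c • v = (-c) • Y v - (-c) • X v := by
        conv_lhs => rw [hXY v]
        rw [smul_sub]; module
      rw [hdecomp, hgP _ (hcone _ hc' _ (hY v)) _ (hcone _ hc' _ (hX v)),
        hsmul _ (hY v) _ hc', hsmul _ (hX v) _ hc']
      simp only [hg]; ring
  set glin : EuclideanSpace ℝ (Fin d) →ₗ[ℝ] ℝ :=
    { toFun := g, map_add' := hgadd, map_smul' := hgsmul }
  set μ : EuclideanSpace ℝ (Fin d) :=
    (InnerProductSpace.toDual ℝ (EuclideanSpace ℝ (Fin d))).symm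
      (LinearMap.toContinuousLinearMap glin) with hμ
  refine ⟨μ, fun x hx => ?_⟩
  have h1 : ⟪μ, x⟫ = g x := by
    rw [hμ, InnerProductSpace.toDual_symm_apply]
    rfl
  have h2 : g x = f x := by
    have : g (x - 0) = f x - f 0 := hgP x hx 0 hzeroP
    rw [sub_zero, hzero, sub_zero] at this
    exact this
  rw [h1, h2]
end

section
/- Let S be a pure isometry on a Hilbert space H (i.e., ∩_{n≥1} S^n H = {0}). Suppose a bounded operator θ on H commutes with S and leaves Ker(S*) invariant. Then θ commutes with S*. -/
theorem stmt13 {H : Type*} [NormedAddCommGroup H] [InnerProductSpace ℂ H]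
    [CompleteSpace H] [TopologicalSpace.SeparableSpace H]
    (S : H →L[ℂ] H) (hS : ∀ x : H, ‖S x‖ = ‖x‖)
    (hpure : ∀ x : H, (∀ n : ℕ, x ∈ Set.range ⇑(S ^ n)) → x = 0)
    (θ : H →L[ℂ] H)
    (hcomm : θ.comp S = S.comp θ)
    (hinv : ∀ x : H, ContinuousLinearMap.adjoint S x = 0 →
      ContinuousLinearMap.adjoint S (θ x) = 0) :
    θ.comp (ContinuousLinearMap.adjoint S) =
      (ContinuousLinearMap.adjoint S).comp θ := by
  set T := ContinuousLinearMap.adjoint S with hT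
  -- S is a linear isometry, hence preserves inner products
  have hinner : ∀ x y : H, inner ℂ (S x) (S y) = (inner ℂ x y : ℂ) := by
    intro x y
    exact (⟨S.toLinearMap, hS⟩ : H →ₗᵢ[ℂ] H).inner_map_map x y
  have hTS : ∀ x : H, T (S x) = x := by
    intro x
    apply ext_inner_right ℂ
    intro y
    rw [hT, ContinuousLinearMap.adjoint_inner_left, hinner]
  have hθS : ∀ x : H, θ (S x) = S (θ x) := fun x =>
    congrFun (congrArg DFunLike.coe hcomm) x
  ext x
  simp only [ContinuousLinearMap.comp_apply]
  -- decompose x = S (T x) + w with w ∈ ker T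
  set w := x - S (T x) with hw
  have hwk : T w = 0 := by
    rw [hw, map_sub, hTS, sub_self]
  have hθwk : T (θ w) = 0 := hinv w hwk
  have hx : x = S (T x) + w := by rw [hw]; abel
  calc θ (T x) = T (S (θ (T x))) := (hTS _).symm
    _ = T (θ (S (T x))) := by rw [hθS]
    _ = T (θ (S (T x))) + T (θ w) := by rw [hθwk, add_zero]
    _ = T (θ x) := by rw [← map_add, ← map_add, ← hx]
end

section
/- Let P ⊆ R^d (d ≥ 2) be a spanning pointed closed convex cone and pick a ∉ P ∪ (-P). For t > 0 set A_t = P ∪ (ta + P). Then each A_t is a P-module whose isotropy group G_{A_t} is trivial, and for s ≠ t the module A_s is not a translate of A_t. In particular {A_t : t > 0} is an uncountable family of pairwise non-translate P-modules with trivial isotropy. -/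
/-!
Since `P` is a pointed convex cone, the line `ℝ • a` meets `P` only at `0`. If a translate
`z + A_t` equals `A_s`, then `z ∈ A_s` and `-z ∈ A_t` because both sets contain `0`; unless
`z, -z ∈ P`, this writes a negative multiple of `a` as a sum of elements of `P`, which is impossible.
Hence `z = 0`, and then `A_s = A_t` forces `s = t`, since `s • a ∈ A_t` only for `s ∈ {0, t}`.
-/

open Set

section Cone

variable {E : Type*} [AddCommGroup E] [Module ℝ E] {P : Set E} {a : E}

lemma Convex.add_mem_of_smul_mem (hconv : Convex ℝ P)
    (hcone : ∀ c : ℝ, 0 ≤ c → ∀ x ∈ P, c • x ∈ P) {p q : E} (hp : p ∈ P) (hq : q ∈ P) :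
    p + q ∈ P := by
  have hmid := hconv hp hq (by norm_num : (0 : ℝ) ≤ 1 / 2) (by norm_num : (0 : ℝ) ≤ 1 / 2)
    (by norm_num)
  have hsum : (2 : ℝ) • ((1 / 2 : ℝ) • p + (1 / 2 : ℝ) • q) = p + q := by module
  exact hsum ▸ hcone 2 zero_le_two _ hmid

lemma smul_notMem_of_notMem_of_neg_notMem (hcone : ∀ c : ℝ, 0 ≤ c → ∀ x ∈ P, c • x ∈ P)
    (ha : a ∉ P) (ha' : -a ∉ P) {u : ℝ} (hu : u ≠ 0) : u • a ∉ P := by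
  intro h
  rcases hu.lt_or_gt with hneg | hpos
  · have hscale : (-u)⁻¹ • u • a = -a := by
      rw [smul_smul, inv_neg, neg_mul, inv_mul_cancel₀ hu, neg_smul, one_smul]
    exact ha' (hscale ▸ hcone _ (inv_nonneg.2 (neg_nonneg.2 hneg.le)) _ h)
  · have hscale : u⁻¹ • u • a = a := by rw [smul_smul, inv_mul_cancel₀ hu, one_smul]
    exact ha (hscale ▸ hcone _ (inv_nonneg.2 hpos.le) _ h)

variable (ha : ∀ u : ℝ, u ≠ 0 → u • a ∉ P)
include ha

/-- In every case other than `z, -z ∈ P`, a negative multiple of `a` is a sum of two elements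
of `P`. -/
lemma eq_zero_of_mem_union_image_of_neg_mem (hadd : ∀ p ∈ P, ∀ q ∈ P, p + q ∈ P)
    (hpointed : P ∩ -P = {0}) {s t : ℝ}
    (hs : 0 < s) (ht : 0 < t) {z : E} (hz : z ∈ P ∪ (fun x => s • a + x) '' P)
    (hz' : -z ∈ P ∪ (fun x => t • a + x) '' P) : z = 0 := by
  rcases hz with hz | ⟨p, hp, rfl⟩ <;> rcases hz' with hz' | ⟨q, hq, hqz⟩
  · have hmem : z ∈ P ∩ -P := ⟨hz, mem_neg.2 hz'⟩
    rwa [hpointed] at hmem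
  · have hsum : z + q = (-t) • a := by linear_combination (norm := module) hqz
    exact absurd (hsum ▸ hadd z hz q hq) (ha (-t) (by linarith))
  · have hsum : p + -(s • a + p) = (-s) • a := by module
    exact absurd (hsum ▸ hadd p hp _ hz') (ha (-s) (by linarith))
  · have hsum : p + q = (-(s + t)) • a := by linear_combination (norm := module) hqz
    exact absurd (hsum ▸ hadd p hp q hq) (ha (-(s + t)) (by linarith))

lemma eq_zero_or_eq_of_smul_mem_union_image {s t : ℝ}
    (h : s • a ∈ P ∪ (fun x => t • a + x) '' P) : s = 0 ∨ s = t := by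
  rcases h with h | ⟨p, hp, hpa⟩
  · exact .inl (by_contra fun hs => ha s hs h)
  · have hp' : (s - t) • a ∈ P := by rwa [sub_smul, ← hpa, add_sub_cancel_left]
    exact .inr (sub_eq_zero.1 (by_contra fun hst => ha _ hst hp'))

end Cone

lemma add_mem_union_image_add_left {M : Type*} [AddCommMonoid M] {P : Set M}
    (hadd : ∀ p ∈ P, ∀ q ∈ P, p + q ∈ P) (v : M) {p x : M} (hp : p ∈ P)
    (hx : x ∈ P ∪ (fun y => v + y) '' P) : p + x ∈ P ∪ (fun y => v + y) '' P := by
  rcases hx with hx | ⟨q, hq, rfl⟩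
  · exact .inl (hadd p hp x hx)
  · exact .inr ⟨p + q, hadd p hp q hq, add_left_comm v p q⟩

lemma mem_and_neg_mem_of_eq_image_add_right {G : Type*} [AddGroup G] {B C : Set G} {z : G}
    (hB : 0 ∈ B) (hC : 0 ∈ C) (h : B = (fun w => w + z) '' C) : z ∈ B ∧ -z ∈ C := by
  refine ⟨h ▸ ⟨0, hC, zero_add z⟩, ?_⟩
  obtain ⟨w, hw, hwz⟩ := h ▸ hB
  rwa [← eq_neg_of_add_eq_zero_left hwz]

theorem stmt19_general {d : ℕ} (P : Set (EuclideanSpace ℝ (Fin d)))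
    (hclosed : IsClosed P) (hconv : Convex ℝ P)
    (hcone : ∀ c : ℝ, 0 ≤ c → ∀ x ∈ P, c • x ∈ P)
    (hpointed : P ∩ (-P) = {0})
    (a : EuclideanSpace ℝ (Fin d)) (ha : a ∉ P) (ha' : -a ∉ P)
    (A : ℝ → Set (EuclideanSpace ℝ (Fin d)))
    (hA : ∀ t : ℝ, A t = P ∪ ((fun x => t • a + x) '' P)) :
    (∀ t : ℝ, 0 < t →
      (A t).Nonempty ∧ A t ≠ Set.univ ∧ IsClosed (A t) ∧
      (∀ p ∈ P, ∀ x ∈ A t, p + x ∈ A t) ∧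
      (∀ z : EuclideanSpace ℝ (Fin d),
        (fun w => w + z) '' (A t) = A t → z = 0)) ∧
    (∀ s t : ℝ, 0 < s → 0 < t → s ≠ t →
      ¬ ∃ z : EuclideanSpace ℝ (Fin d), A s = (fun w => w + z) '' (A t)) := by
  have hP0 : (0 : EuclideanSpace ℝ (Fin d)) ∈ P := (hpointed.symm ▸ mem_singleton 0 :).1
  have hadd : ∀ p ∈ P, ∀ q ∈ P, p + q ∈ P := fun _ hp _ hq =>
    hconv.add_mem_of_smul_mem hcone hp hq
  have hline : ∀ u : ℝ, u ≠ 0 → u • a ∉ P := fun _ =>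
    smul_notMem_of_notMem_of_neg_notMem hcone ha ha'
  have h0 : ∀ t, 0 ∈ A t := fun t => hA t ▸ .inl hP0
  have hzero : ∀ {s t}, 0 < s → 0 < t → ∀ z, z ∈ A s → -z ∈ A t → z = 0 := fun hs ht z hz hz' =>
    eq_zero_of_mem_union_image_of_neg_mem hline hadd hpointed hs ht (hA _ ▸ hz) (hA _ ▸ hz')
  refine ⟨fun t ht => ⟨⟨0, h0 t⟩, fun huniv => ?_, ?_, ?_, fun z hz => ?_⟩,
    fun s t hs ht hst ⟨z, hz⟩ => ?_⟩
  · have hta : t • a ∈ A t := hA t ▸ .inr ⟨0, hP0, add_zero _⟩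
    have hta0 := hzero ht ht _ hta (huniv ▸ mem_univ _)
    exact hline t ht.ne' (hta0 ▸ hP0)
  · exact hA t ▸ hclosed.union (isClosedMap_add_left _ _ hclosed)
  · exact fun p hp x hx => hA t ▸ add_mem_union_image_add_left hadd _ hp (hA t ▸ hx)
  · obtain ⟨hz, hz'⟩ := mem_and_neg_mem_of_eq_image_add_right (h0 t) (h0 t) hz.symm
    exact hzero ht ht z hz hz'
  · obtain ⟨hz₁, hz₂⟩ := mem_and_neg_mem_of_eq_image_add_right (h0 s) (h0 t) hz
    obtain rfl := hzero hs ht z hz₁ hz₂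
    simp only [add_zero, image_id'] at hz
    have hsa : s • a ∈ A t := hz ▸ hA s ▸ .inr ⟨0, hP0, add_zero _⟩
    exact (eq_zero_or_eq_of_smul_mem_union_image hline (hA t ▸ hsa)).elim hs.ne' hst

theorem stmt19 {d : ℕ} (hd : 2 ≤ d) (P : Set (EuclideanSpace ℝ (Fin d)))
    (hclosed : IsClosed P) (hconv : Convex ℝ P)
    (hcone : ∀ c : ℝ, 0 ≤ c → ∀ x ∈ P, c • x ∈ P)
    (hspan : ∀ v : EuclideanSpace ℝ (Fin d), ∃ x ∈ P, ∃ y ∈ P, v = x - y)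
    (hpointed : P ∩ (-P) = {0})
    (a : EuclideanSpace ℝ (Fin d)) (ha : a ∉ P) (ha' : -a ∉ P)
    (A : ℝ → Set (EuclideanSpace ℝ (Fin d)))
    (hA : ∀ t : ℝ, A t = P ∪ ((fun x => t • a + x) '' P)) :
    (∀ t : ℝ, 0 < t →
      (A t).Nonempty ∧ A t ≠ Set.univ ∧ IsClosed (A t) ∧
      (∀ p ∈ P, ∀ x ∈ A t, p + x ∈ A t) ∧
      (∀ z : EuclideanSpace ℝ (Fin d),
        (fun w => w + z) '' (A t) = A t → z = 0)) ∧
    (∀ s t : ℝ, 0 < s → 0 < t → s ≠ t →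
      ¬ ∃ z : EuclideanSpace ℝ (Fin d), A s = (fun w => w + z) '' (A t)) :=
  stmt19_general P hclosed hconv hcone hpointed a ha ha' A hA
end
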